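/- arXiv:2512.20532 — 2 statements merged into one kernel-verified Lean document; each statement's English description precedes it below -/
import Mathlib

section
/- Let C0, C1 ⊆ F2^{nA} and C0', C1' ⊆ F2^{nB} be binary linear codes with X-check space 𝒳 = (C0^⊥ ⊗ C0') + (C1^⊥ ⊗ C1') and Z-check space 𝒵 = (C0 ⊗ C1'^⊥) + (C1 ⊗ C0'^⊥). Then the base CSS code dimension k = nA·nB - dim(𝒳) - dim(𝒵) equals dim(C0 ∩ C1)·dim(C0' ∩ C1') + dim(C0^⊥ ∩ C1^⊥)·dim(C0'^⊥ ∩ C1'^⊥). -/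
open Matrix

abbrev F2 : Type := ZMod 2

/-- The dual code of a linear code `C ⊆ F2^n` w.r.t. the standard bilinear form. -/
def dualCode {n : ℕ} (C : Submodule F2 (Fin n → F2)) : Submodule F2 (Fin n → F2) where
  carrier := {x | ∀ c ∈ C, x ⬝ᵥ c = 0}
  add_mem' := by
    intro a b ha hb c hc
    rw [Set.mem_setOf_eq] at *
    rw [add_dotProduct, ha c hc, hb c hc, add_zero]
  zero_mem' := by
    intro c hc
    simp
  smul_mem' := by
    intro r x hx c hc
    rw [Set.mem_setOf_eq] at *
    rw [smul_dotProduct, hx c hc, smul_zero]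

/-- `U ⊗ V`, the subspace of `F2^{nA} ⊗ F2^{nB}` (viewed as `nA × nB` matrices)
spanned by pure tensors `u ⊗ v` with `u ∈ U, v ∈ V`. -/
def tensorSpan {nA nB : ℕ} (U : Submodule F2 (Fin nA → F2)) (V : Submodule F2 (Fin nB → F2)) :
    Submodule F2 (Matrix (Fin nA) (Fin nB) F2) :=
  Submodule.span F2 {M | ∃ u ∈ U, ∃ v ∈ V, M = Matrix.of fun i j => u i * v j}

/-!
Identify `F2^{nA} ⊗ F2^{nB}` with `nA × nB` matrices, so that `tensorSpan U V` is the image of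
`U ⊗ V`. Since tensoring over a field is exact, `U ⊗ V = (U ⊗ N) ∩ (M ⊗ V)`, and intersecting
the one-sided pieces factor by factor gives `(U₀ ⊗ V₀) ∩ (U₁ ⊗ V₁) = (U₀ ∩ U₁) ⊗ (V₀ ∩ V₁)`.
Inclusion–exclusion then computes `dim 𝒳` and `dim 𝒵`, and the claim reduces to arithmetic with
`dim C^⊥ = n - dim C` and `dim (C₀^⊥ ∩ C₁^⊥) = n - k₀ - k₁ + dim (C₀ ∩ C₁)`.
-/

open TensorProduct LinearMap

section Flat

variable {R M M' M'' N : Type*} [CommRing R] [AddCommGroup M] [Module R M]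
  [AddCommGroup M'] [Module R M'] [AddCommGroup M''] [Module R M'']
  [AddCommGroup N] [Module R N]

lemma LinearMap.ker_rTensor_prod (f : M →ₗ[R] M') (g : M →ₗ[R] M'') :
    ker (rTensor N (f.prod g)) = ker (rTensor N f) ⊓ ker (rTensor N g) := by
  have : (prodLeft R R M' M'' N).toLinearMap ∘ₗ rTensor N (f.prod g)
      = (rTensor N f).prod (rTensor N g) := TensorProduct.ext' fun _ _ => rfl
  rw [← ker_prod, ← this, LinearEquiv.ker_comp]

lemma LinearMap.ker_lTensor_prod (f : M →ₗ[R] M') (g : M →ₗ[R] M'') :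
    ker (lTensor N (f.prod g)) = ker (lTensor N f) ⊓ ker (lTensor N g) := by
  have : (prodRight R R N M' M'').toLinearMap ∘ₗ lTensor N (f.prod g)
      = (lTensor N f).prod (lTensor N g) := TensorProduct.ext' fun _ _ => rfl
  rw [← ker_prod, ← this, LinearEquiv.ker_comp]

variable [Module.Flat R N]

lemma LinearMap.range_rTensor_ker_subtype (f : M →ₗ[R] M') :
    range (rTensor N (ker f).subtype) = ker (rTensor N f) :=
  (exact_iff.mp (Module.Flat.rTensor_exact N f.exact_subtype_ker_map)).symm

lemma LinearMap.range_lTensor_ker_subtype (f : M →ₗ[R] M') :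
    range (lTensor N (ker f).subtype) = ker (lTensor N f) :=
  (exact_iff.mp (Module.Flat.lTensor_exact N f.exact_subtype_ker_map)).symm

lemma Submodule.range_lTensor_subtype (p : Submodule R M) :
    range (lTensor N p.subtype) = ker (lTensor N p.mkQ) :=
  (exact_iff.mp (Module.Flat.lTensor_exact N (LinearMap.exact_subtype_mkQ p))).symm

lemma Submodule.range_rTensor_subtype_inf (p q : Submodule R M) :
    range (rTensor N p.subtype) ⊓ range (rTensor N q.subtype)
      = range (rTensor N (p ⊓ q).subtype) := by
  have h := range_rTensor_ker_subtype (N := N) (p.mkQ.prod q.mkQ)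
  rw [ker_prod, ker_rTensor_prod, ← range_rTensor_ker_subtype, ← range_rTensor_ker_subtype,
    Submodule.ker_mkQ, Submodule.ker_mkQ] at h
  exact h.symm

lemma Submodule.range_lTensor_subtype_inf (p q : Submodule R M) :
    range (lTensor N p.subtype) ⊓ range (lTensor N q.subtype)
      = range (lTensor N (p ⊓ q).subtype) := by
  have h := range_lTensor_ker_subtype (N := N) (p.mkQ.prod q.mkQ)
  rw [ker_prod, ker_lTensor_prod, ← range_lTensor_ker_subtype, ← range_lTensor_ker_subtype,
    Submodule.ker_mkQ, Submodule.ker_mkQ] at h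
  exact h.symm

end Flat

section Field

variable {K M N : Type*} [Field K] [AddCommGroup M] [Module K M] [AddCommGroup N] [Module K N]

lemma TensorProduct.mapIncl_eq_rTensor_comp_lTensor (U : Submodule K M) (V : Submodule K N) :
    mapIncl U V = rTensor N U.subtype ∘ₗ lTensor U V.subtype :=
  TensorProduct.ext' fun _ _ => rfl

lemma TensorProduct.mapIncl_eq_lTensor_comp_rTensor (U : Submodule K M) (V : Submodule K N) :
    mapIncl U V = lTensor M V.subtype ∘ₗ rTensor V U.subtype :=
  TensorProduct.ext' fun _ _ => rfl

lemma TensorProduct.range_mapIncl_eq_inf (U : Submodule K M) (V : Submodule K N) :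
    range (mapIncl U V) = range (rTensor N U.subtype) ⊓ range (lTensor M V.subtype) := by
  refine le_antisymm (le_inf ?_ ?_) ?_
  · rw [mapIncl_eq_rTensor_comp_lTensor]
    exact range_comp_le_range _ _
  · rw [mapIncl_eq_lTensor_comp_rTensor]
    exact range_comp_le_range _ _
  · rintro _ ⟨⟨y, rfl⟩, hy⟩
    rw [SetLike.mem_coe, V.range_lTensor_subtype, mem_ker, ← LinearMap.comp_apply,
      lTensor_comp_rTensor, ← rTensor_comp_lTensor, LinearMap.comp_apply] at hy
    obtain ⟨z, rfl⟩ : y ∈ range (lTensor U V.subtype) := by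
      rw [V.range_lTensor_subtype, mem_ker]
      exact Module.Flat.rTensor_preserves_injective_linearMap _ U.injective_subtype
        (hy.trans (map_zero _).symm)
    exact ⟨z, by rw [mapIncl_eq_rTensor_comp_lTensor, LinearMap.comp_apply]⟩

lemma TensorProduct.range_mapIncl_inf (U₀ U₁ : Submodule K M) (V₀ V₁ : Submodule K N) :
    range (mapIncl U₀ V₀) ⊓ range (mapIncl U₁ V₁)
      = range (mapIncl (U₀ ⊓ U₁) (V₀ ⊓ V₁)) := by
  simp only [range_mapIncl_eq_inf]
  rw [inf_inf_inf_comm, Submodule.range_rTensor_subtype_inf, Submodule.range_lTensor_subtype_inf]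

lemma TensorProduct.finrank_range_mapIncl [FiniteDimensional K M] [FiniteDimensional K N]
    (U : Submodule K M) (V : Submodule K N) :
    Module.finrank K (range (mapIncl U V)) = Module.finrank K U * Module.finrank K V := by
  rw [finrank_range_of_inj (Module.Flat.tensorProduct_mapIncl_injective_of_left U V),
    Module.finrank_tensorProduct]

end Field

namespace Matrix

variable (R m n : Type*) [CommRing R] [Fintype m] [DecidableEq m]

noncomputable def tensorEquivMatrix : (m → R) ⊗[R] (n → R) ≃ₗ[R] Matrix m n R :=
  TensorProduct.comm R _ _ ≪≫ₗ piScalarRight R R (n → R) m ≪≫ₗ ofLinearEquiv R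

variable {R m n}

@[simp]
lemma tensorEquivMatrix_tmul (u : m → R) (v : n → R) :
    tensorEquivMatrix R m n (u ⊗ₜ v) = of fun i j => u i * v j := by
  ext i j
  simp [tensorEquivMatrix]

end Matrix

lemma tensorSpan_eq_map_range_mapIncl {nA nB : ℕ} (U : Submodule F2 (Fin nA → F2))
    (V : Submodule F2 (Fin nB → F2)) :
    tensorSpan U V
      = (range (mapIncl U V)).map (tensorEquivMatrix F2 (Fin nA) (Fin nB)).toLinearMap := by
  rw [range_mapIncl, Submodule.map₂_eq_span_image2, Submodule.map_span, tensorSpan]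
  congr 1
  ext A
  constructor
  · rintro ⟨u, hu, v, hv, rfl⟩
    exact ⟨u ⊗ₜ v, ⟨u, hu, v, hv, rfl⟩, tensorEquivMatrix_tmul u v⟩
  · rintro ⟨_, ⟨u, hu, v, hv, rfl⟩, rfl⟩
    exact ⟨u, hu, v, hv, tensorEquivMatrix_tmul u v⟩

lemma finrank_tensorSpan {nA nB : ℕ} (U : Submodule F2 (Fin nA → F2))
    (V : Submodule F2 (Fin nB → F2)) :
    Module.finrank F2 (tensorSpan U V) = Module.finrank F2 U * Module.finrank F2 V := by
  rw [tensorSpan_eq_map_range_mapIncl, LinearEquiv.finrank_map_eq, finrank_range_mapIncl]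

lemma tensorSpan_inf {nA nB : ℕ} (U₀ U₁ : Submodule F2 (Fin nA → F2))
    (V₀ V₁ : Submodule F2 (Fin nB → F2)) :
    tensorSpan U₀ V₀ ⊓ tensorSpan U₁ V₁ = tensorSpan (U₀ ⊓ U₁) (V₀ ⊓ V₁) := by
  simp only [tensorSpan_eq_map_range_mapIncl]
  rw [← Submodule.map_inf _ (LinearEquiv.injective _), range_mapIncl_inf]

lemma finrank_tensorSpan_sup {nA nB : ℕ} (U₀ U₁ : Submodule F2 (Fin nA → F2))
    (V₀ V₁ : Submodule F2 (Fin nB → F2)) :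
    Module.finrank F2 ↥(tensorSpan U₀ V₀ ⊔ tensorSpan U₁ V₁)
        + Module.finrank F2 ↥(U₀ ⊓ U₁) * Module.finrank F2 ↥(V₀ ⊓ V₁)
      = Module.finrank F2 U₀ * Module.finrank F2 V₀
        + Module.finrank F2 U₁ * Module.finrank F2 V₁ := by
  rw [← finrank_tensorSpan, ← tensorSpan_inf, Submodule.finrank_sup_add_finrank_inf_eq,
    finrank_tensorSpan, finrank_tensorSpan]

lemma Matrix.ker_dotProductBilin {R m : Type*} [CommRing R] [Fintype m] [DecidableEq m] :
    LinearMap.ker (dotProductBilin R R : (m → R) →ₗ[R] (m → R) →ₗ[R] R) = ⊥ := by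
  refine (Submodule.eq_bot_iff _).mpr fun x hx => funext fun i => ?_
  simpa using congr($hx (Pi.single i 1))

lemma dualCode_eq_orthogonal {n : ℕ} (C : Submodule F2 (Fin n → F2)) :
    dualCode C = LinearMap.BilinForm.orthogonal (dotProductBilin F2 F2) C := by
  ext x
  simp only [LinearMap.BilinForm.mem_orthogonal_iff, dotProductBilin_apply_apply,
    dotProduct_comm _ x]
  rfl

lemma finrank_dualCode_add_finrank {n : ℕ} (C : Submodule F2 (Fin n → F2)) :
    Module.finrank F2 (dualCode C) + Module.finrank F2 C = n := by
  have h := LinearMap.BilinForm.finrank_add_finrank_orthogonal' (B := dotProductBilin F2 F2) C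
  rw [ker_dotProductBilin, inf_bot_eq, finrank_bot, Module.finrank_fin_fun] at h
  rw [dualCode_eq_orthogonal]
  omega

lemma dualCode_sup {n : ℕ} (C₀ C₁ : Submodule F2 (Fin n → F2)) :
    dualCode (C₀ ⊔ C₁) = dualCode C₀ ⊓ dualCode C₁ := by
  ext x
  refine ⟨fun h => ⟨fun c hc => h c (Submodule.mem_sup_left hc),
    fun c hc => h c (Submodule.mem_sup_right hc)⟩, ?_⟩
  rintro ⟨h₀, h₁⟩ c hc
  obtain ⟨p, hp, q, hq, rfl⟩ := Submodule.mem_sup.mp hc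
  change x ⬝ᵥ (p + q) = 0
  rw [dotProduct_add, h₀ p hp, h₁ q hq, add_zero]

lemma finrank_dualCode_inf_add {n : ℕ} (C₀ C₁ : Submodule F2 (Fin n → F2)) :
    Module.finrank F2 ↥(dualCode C₀ ⊓ dualCode C₁) + Module.finrank F2 C₀
        + Module.finrank F2 C₁
      = n + Module.finrank F2 ↥(C₀ ⊓ C₁) := by
  have hsup := finrank_dualCode_add_finrank (C₀ ⊔ C₁)
  have hC := Submodule.finrank_sup_add_finrank_inf_eq C₀ C₁
  rw [dualCode_sup] at hsup
  omega

theorem stmt4 {nA nB : ℕ} (C0 C1 : Submodule F2 (Fin nA → F2))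
    (C0' C1' : Submodule F2 (Fin nB → F2)) :
    Module.finrank F2
        ((tensorSpan (dualCode C0) C0' ⊔ tensorSpan (dualCode C1) C1' :
            Submodule F2 (Matrix (Fin nA) (Fin nB) F2)))
      + Module.finrank F2
          ((tensorSpan C0 (dualCode C1') ⊔ tensorSpan C1 (dualCode C0') :
            Submodule F2 (Matrix (Fin nA) (Fin nB) F2)))
      + (Module.finrank F2 ((C0 ⊓ C1 : Submodule F2 (Fin nA → F2)))
            * Module.finrank F2 ((C0' ⊓ C1' : Submodule F2 (Fin nB → F2)))
          + Module.finrank F2 ((dualCode C0 ⊓ dualCode C1 : Submodule F2 (Fin nA → F2)))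
            * Module.finrank F2 ((dualCode C0' ⊓ dualCode C1' : Submodule F2 (Fin nB → F2))))
      = nA * nB := by
  have hX := finrank_tensorSpan_sup (dualCode C0) (dualCode C1) C0' C1'
  have hZ := finrank_tensorSpan_sup C0 C1 (dualCode C1') (dualCode C0')
  rw [inf_comm (dualCode C1')] at hZ
  have hdual := finrank_dualCode_inf_add C0 C1
  have hdual' := finrank_dualCode_inf_add C0' C1'
  have h0 := finrank_dualCode_add_finrank C0
  have h1 := finrank_dualCode_add_finrank C1
  have h0' := finrank_dualCode_add_finrank C0'
  have h1' := finrank_dualCode_add_finrank C1'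
  set k₀ := Module.finrank F2 C0
  set k₁ := Module.finrank F2 C1
  set k₀' := Module.finrank F2 C0'
  set k₁' := Module.finrank F2 C1'
  set m' := Module.finrank F2 ↥(C0' ⊓ C1')
  set s' := Module.finrank F2 ↥(dualCode C0' ⊓ dualCode C1')
  zify at *
  linear_combination hX + hZ + (s' - m' : ℤ) * hdual + (nA - k₀ - k₁ : ℤ) * hdual'
    + k₀' * h0 + k₁' * h1 + k₁ * h0' + k₀ * h1'
end

section
/- Let C0, C1 ⊆ F2^{nA} be binary linear codes, G a finite group, and P a permutation matrix on F2^{nA·|G|} (column-indexed by [nA] × G). Consider the two block matrices X0 whose row space consists of all vectors of F2^{2·nA·|G|} of the form (w, w) with w ∈ Row(H0 ⊗ I_{|G|}), and X1 whose row space consists of all vectors (w', w'·Q) with w' ∈ Row(H1 ⊗ I_{|G|}), where Q = I_{nA} ⊗ Q_G for a permutation matrix Q_G on F2^{|G|} that is a single |G|-cycle. Then dim(Row(X0) ∩ Row(X1)) = dim(C0^⊥ ∩ C1^⊥). -/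
open Matrix

/-- The row space of a matrix, as a submodule of the space of row vectors. -/
def rowSpace {R C : Type*} (M : Matrix R C F2) : Submodule F2 (C → F2) :=
  Submodule.span F2 (Set.range M)

open Kronecker

/-! A pair `(w, w)` lies in the graph of the shift `Q` exactly when `Q w = w`, so the intersection
is the diagonal image of `Row(H0 ⊗ I) ∩ Row(H1 ⊗ I) ∩ Fix(Q)`. Because `σ` is one cycle through
all of `G`, the `Q`-fixed vectors are the ones constant on each `G`-fibre, i.e. the pullbacks of
vectors on `[nA]` along the projection `[nA] × G → [nA]`; such a pullback lies in `Row(H ⊗ I)`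
iff the vector itself lies in `Row(H)`. So the intersection is an injective image of
`C0^⊥ ∩ C1^⊥`. -/

theorem Equiv.Perm.SameCycle.apply_eq_of_forall_apply_eq {α β : Type*} {σ : Equiv.Perm α}
    {f : α → β} (hf : ∀ x, f (σ x) = f x) {x y : α} (h : σ.SameCycle x y) : f x = f y := by
  have pow_invariant (τ : Equiv.Perm α) (hτ : ∀ x, f (τ x) = f x) (n : ℕ) (x : α) :
      f ((τ ^ n) x) = f x := by
    induction n with
    | zero => rfl
    | succ n ih => rw [pow_succ', Equiv.Perm.mul_apply, hτ, ih]
  have hf_inv (x : α) : f (σ⁻¹ x) = f x := by rw [← hf, Equiv.Perm.coe_inv, Equiv.apply_symm_apply]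
  obtain ⟨i, rfl⟩ := h
  obtain ⟨n, rfl | rfl⟩ := Int.eq_nat_or_neg i
  · rw [zpow_natCast, pow_invariant σ hf]
  · rw [_root_.zpow_neg, zpow_natCast, ← inv_pow, pow_invariant σ⁻¹ hf_inv]

theorem Equiv.Perm.IsCycle.apply_eq_of_support_eq_univ {α β : Type*} [Fintype α] [DecidableEq α]
    {σ : Equiv.Perm α} (hσ : σ.IsCycle) (hsupp : σ.support = Finset.univ) {f : α → β}
    (hf : ∀ x, f (σ x) = f x) (x y : α) : f x = f y :=
  have moved (z : α) : σ z ≠ z := Equiv.Perm.mem_support.mp (hsupp ▸ Finset.mem_univ z)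
  (hσ.sameCycle (moved x) (moved y)).apply_eq_of_forall_apply_eq hf

theorem LinearMap.eqLocus_funLeft_prodMap_eq_range_funLeft_fst {R M α ι : Type*} [Semiring R]
    [AddCommMonoid M] [Module R M] [Fintype ι] [DecidableEq ι] {σ : Equiv.Perm ι}
    (hσ : σ.IsCycle) (hsupp : σ.support = Finset.univ) :
    LinearMap.eqLocus (LinearMap.funLeft R M (fun p : α × ι => (p.1, σ p.2))) LinearMap.id =
      LinearMap.range (LinearMap.funLeft R M (Prod.fst : α × ι → α)) := by
  have ⟨b₀, _⟩ := hσ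
  ext v
  constructor
  · intro hv
    refine ⟨fun a => v (a, b₀), funext fun p => ?_⟩
    exact hσ.apply_eq_of_support_eq_univ hsupp (f := fun b => v (p.1, b))
      (fun b => congrFun hv (p.1, b)) b₀ p.2
  · rintro ⟨u, rfl⟩
    rfl

theorem Submodule.map_diagonal_inf_map_graph {R M : Type*} [Semiring R] [AddCommMonoid M]
    [Module R M] (W₀ W₁ : Submodule R M) (T : M →ₗ[R] M) :
    W₀.map (LinearMap.id.prod LinearMap.id) ⊓ W₁.map (LinearMap.id.prod T) =
      (W₀ ⊓ W₁ ⊓ LinearMap.eqLocus T LinearMap.id).map (LinearMap.id.prod LinearMap.id) := by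
  apply le_antisymm
  · rintro _ ⟨⟨u, hu, rfl⟩, ⟨w, hw, hwu⟩⟩
    obtain ⟨rfl, hTw⟩ := Prod.ext_iff.mp hwu
    exact ⟨w, ⟨⟨hu, hw⟩, hTw⟩, rfl⟩
  · rintro _ ⟨w, ⟨⟨hw₀, hw₁⟩, hTw⟩, rfl⟩
    exact ⟨⟨w, hw₀, rfl⟩, ⟨w, hw₁, Prod.ext rfl hTw⟩⟩

def fiberExtendByZero {R α ι : Type*} [Semiring R] [DecidableEq ι] (b : ι) :
    (α → R) →ₗ[R] (α × ι → R) where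
  toFun u p := if p.2 = b then u p.1 else 0
  map_add' u v := by funext p; by_cases h : p.2 = b <;> simp [h]
  map_smul' c u := by funext p; by_cases h : p.2 = b <;> simp [h]

section RowSpace

variable {R C ι : Type*} [Fintype ι] [DecidableEq ι] (H : Matrix R C F2)

theorem mem_rowSpace_kronecker_one_iff (v : C × ι → F2) :
    v ∈ rowSpace (H ⊗ₖ (1 : Matrix ι ι F2)) ↔ ∀ b, (fun a => v (a, b)) ∈ rowSpace H := by
  constructor
  · intro hv b
    suffices rowSpace (H ⊗ₖ (1 : Matrix ι ι F2)) ≤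
        (rowSpace H).comap (LinearMap.funLeft F2 F2 (fun a : C => (a, b))) from this hv
    rw [rowSpace, Submodule.span_le]
    rintro _ ⟨⟨i, j⟩, rfl⟩
    have hslice : LinearMap.funLeft F2 F2 (fun a : C => (a, b)) ((H ⊗ₖ (1 : Matrix ι ι F2)) (i, j))
        = (1 : Matrix ι ι F2) j b • H i := by
      funext a
      simp [mul_comm]
    rw [SetLike.mem_coe, Submodule.mem_comap, hslice]
    exact Submodule.smul_mem _ _ (Submodule.subset_span ⟨i, rfl⟩)
  · intro hv
    have hextend (b : ι) : rowSpace H ≤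
        (rowSpace (H ⊗ₖ (1 : Matrix ι ι F2))).comap (fiberExtendByZero b) := by
      rw [rowSpace, Submodule.span_le]
      rintro _ ⟨i, rfl⟩
      have hrow : fiberExtendByZero b (H i) = (H ⊗ₖ (1 : Matrix ι ι F2)) (i, b) := by
        funext ⟨a, c⟩
        by_cases h : c = b <;> simp [fiberExtendByZero, one_apply, h, eq_comm]
      rw [SetLike.mem_coe, Submodule.mem_comap, hrow]
      exact Submodule.subset_span ⟨(i, b), rfl⟩
    have hsum : v = ∑ b : ι, fiberExtendByZero b (fun a => v (a, b)) := by
      funext ⟨a, c⟩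
      simp [fiberExtendByZero, Finset.sum_apply]
    rw [hsum]
    exact Submodule.sum_mem _ fun b _ => hextend b (hv b)

theorem comap_funLeft_fst_rowSpace_kronecker_one [Nonempty ι] :
    (rowSpace (H ⊗ₖ (1 : Matrix ι ι F2))).comap (LinearMap.funLeft F2 F2 (Prod.fst : C × ι → C)) =
      rowSpace H := by
  ext u
  rw [Submodule.mem_comap, mem_rowSpace_kronecker_one_iff]
  exact ⟨fun h => h (Classical.arbitrary ι), fun h _ => h⟩

end RowSpace

open Kronecker in
theorem stmt9 {nA m r0 r1 : ℕ}
    (C0 C1 : Submodule F2 (Fin nA → F2))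
    (H0 : Matrix (Fin r0) (Fin nA) F2) (H1 : Matrix (Fin r1) (Fin nA) F2)
    (hH0 : rowSpace H0 = dualCode C0) (hH1 : rowSpace H1 = dualCode C1)
    (σ : Equiv.Perm (Fin m)) (hcyc : σ.IsCycle) (hsupp : σ.support = Finset.univ) :
    -- Row(X0) consists of vectors (w, w) with w ∈ Row(H0 ⊗ I_m);
    -- Row(X1) consists of vectors (w', w'·Q) with w' ∈ Row(H1 ⊗ I_m), Q = I_{nA} ⊗ Q_G.
    Module.finrank F2
      (((rowSpace (H0 ⊗ₖ (1 : Matrix (Fin m) (Fin m) F2))).map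
            (LinearMap.prod LinearMap.id LinearMap.id) ⊓
        (rowSpace (H1 ⊗ₖ (1 : Matrix (Fin m) (Fin m) F2))).map
            (LinearMap.prod LinearMap.id
              (LinearMap.funLeft F2 F2 (fun p : Fin nA × Fin m => (p.1, σ p.2)))) :
          Submodule F2 ((Fin nA × Fin m → F2) × (Fin nA × Fin m → F2))))
      = Module.finrank F2 ((dualCode C0 ⊓ dualCode C1 : Submodule F2 (Fin nA → F2))) := by
  have ⟨b₀, _⟩ := hcyc
  have : Nonempty (Fin m) := ⟨b₀⟩
  set J := LinearMap.funLeft F2 F2 (Prod.fst : Fin nA × Fin m → Fin nA)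
  set diag := (LinearMap.id : (Fin nA × Fin m → F2) →ₗ[F2] _).prod LinearMap.id
  have hJ : Function.Injective J :=
    LinearMap.funLeft_injective_of_surjective _ _ _ Prod.fst_surjective
  have hdiag : Function.Injective diag := fun x y h => congrArg Prod.fst h
  rw [Submodule.map_diagonal_inf_map_graph, LinearMap.eqLocus_funLeft_prodMap_eq_range_funLeft_fst
    hcyc hsupp, inf_comm, ← Submodule.map_comap_eq, Submodule.comap_inf,
    comap_funLeft_fst_rowSpace_kronecker_one, comap_funLeft_fst_rowSpace_kronecker_one, hH0, hH1,
    ← Submodule.map_comp]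
  exact (Submodule.equivMapOfInjective (diag ∘ₗ J) (hdiag.comp hJ) _).finrank_eq.symm
end
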